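/- arXiv:1509.02503 — 4 statements merged into one kernel-verified Lean document; each statement's English description precedes it below -/
import Mathlib

section
/- For every 3×3 matrix Y = (y^i_j), perm_3(Y) equals the determinant of the 7×7 matrix given by Grenet's construction: the matrix with rows (0, y^1_1, y^2_1, y^3_1, 0, 0, 0), (0, 1, 0, 0, y^3_3, y^2_3, 0), (0, 0, 1, 0, 0, y^1_3, y^3_3), (0, 0, 0, 1, y^1_3, 0, y^2_3), (y^2_2, 0, 0, 0, 1, 0, 0), (y^3_2, 0, 0, 0, 0, 1, 0), (y^1_2, 0, 0, 0, 0, 0, 1). -/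
/-!
Grenet's matrix is the weighted adjacency matrix of a graph with a vertex 0 and two layers of
three vertices, each inner vertex carrying a loop of weight 1: `a` weighs the edges from 0 to the
first layer, `B` those between the layers and `c` those from the second layer back to 0. As there
is no loop at 0, every cycle cover consists of one 3-cycle `0 → i → j → 0` (an even permutation)
and loops, so the determinant is `a ⬝ᵥ B *ᵥ c`; algebraically, this is two Schur complements
against identity blocks. With Grenet's weights a first-layer vertex records which row is used in
column 1 and a second-layer vertex which two rows are used in columns 1 and 3, so the six
summands of `a ⬝ᵥ B *ᵥ c` are the six terms of the permanent.
-/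

open Matrix

namespace Matrix

theorem permanent_fin_three {R : Type*} [CommSemiring R] (A : Matrix (Fin 3) (Fin 3) R) :
    permanent A =
      A 0 0 * A 1 1 * A 2 2 + A 0 0 * A 1 2 * A 2 1
      + A 0 1 * A 1 0 * A 2 2 + A 0 1 * A 1 2 * A 2 0
      + A 0 2 * A 1 0 * A 2 1 + A 0 2 * A 1 1 * A 2 0 := by
  have univ_perm : (Finset.univ : Finset (Equiv.Perm (Fin 3))) =
      {1, .swap 1 2, .swap 0 1, .swap 0 1 * .swap 1 2, .swap 1 2 * .swap 0 1, .swap 0 2} := by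
    decide
  simp +decide only [permanent, univ_perm, Fin.prod_univ_three, Finset.sum_insert,
    Finset.mem_insert, Finset.mem_singleton, Finset.sum_singleton, Equiv.Perm.coe_one, id_eq,
    Equiv.Perm.coe_mul, Function.comp_apply, Equiv.swap_apply_def, ↓reduceIte, not_false_eq_true]
  ring

variable {R m n : Type*} [DecidableEq m] [DecidableEq n]

/-- The block matrix `!![0, a, 0; 0, 1, B; c, 0, 1]` with index set `(Fin 1 ⊕ m) ⊕ n`. -/
def layeredPathMatrix [Zero R] [One R] (a : m → R) (B : Matrix m n R) (c : n → R) :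
    Matrix ((Fin 1 ⊕ m) ⊕ n) ((Fin 1 ⊕ m) ⊕ n) R :=
  fromBlocks (fromBlocks 0 (replicateRow (Fin 1) a) 0 1) (fromRows 0 B)
    (fromCols (replicateCol (Fin 1) c) 0) 1

variable [CommRing R] [Fintype m] [Fintype n]

theorem det_layeredPathMatrix (a : m → R) (B : Matrix m n R) (c : n → R) :
    det (layeredPathMatrix a B c) = a ⬝ᵥ (B *ᵥ c) := by
  rw [layeredPathMatrix, det_fromBlocks_one₂₂, fromRows_mul_fromCols]
  simp only [Matrix.zero_mul, Matrix.mul_zero, sub_eq_add_neg, fromBlocks_neg, fromBlocks_add,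
    neg_zero, add_zero, zero_add]
  rw [det_fromBlocks_one₂₂, det_unique, ← replicateCol_mulVec, Matrix.mul_neg,
    replicateRow_mul_replicateCol]
  simp

end Matrix

/-- Grenet's expression: the 3×3 permanent equals the determinant of an
explicit 7×7 matrix whose entries are variables, constants 0 and 1. -/
theorem perm_three_eq_det_grenet {R : Type*} [CommRing R]
    (Y : Matrix (Fin 3) (Fin 3) R) :
    (∑ σ : Equiv.Perm (Fin 3), ∏ i, Y i (σ i)) =
      Matrix.det
        !![0,     Y 0 0, Y 1 0, Y 2 0, 0,     0,     0;
           0,     1,     0,     0,     Y 2 2, Y 1 2, 0;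
           0,     0,     1,     0,     0,     Y 0 2, Y 2 2;
           0,     0,     0,     1,     Y 0 2, 0,     Y 1 2;
           Y 1 1, 0,     0,     0,     1,     0,     0;
           Y 2 1, 0,     0,     0,     0,     1,     0;
           Y 0 1, 0,     0,     0,     0,     0,     1] := by
  let e : (Fin 1 ⊕ Fin 3) ⊕ Fin 3 ≃ Fin 7 :=
    (finSumFinEquiv.sumCongr (Equiv.refl _)).trans finSumFinEquiv
  rw [← det_reindex_self e.symm]
  calc (∑ σ : Equiv.Perm (Fin 3), ∏ i, Y i (σ i)) = Yᵀ.permanent := rfl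
    _ = ![Y 0 0, Y 1 0, Y 2 0] ⬝ᵥ
          (!![Y 2 2, Y 1 2, 0; 0, Y 0 2, Y 2 2; Y 0 2, 0, Y 1 2] *ᵥ ![Y 1 1, Y 2 1, Y 0 1]) := by
      rw [permanent_fin_three]
      simp only [transpose_apply, dotProduct, mulVec, of_apply, Fin.sum_univ_three, cons_val',
        cons_val_fin_one, cons_val_zero, cons_val_one, cons_val, zero_mul, add_zero, zero_add]
      ring
    _ = det (layeredPathMatrix _ _ _) := (det_layeredPathMatrix _ _ _).symm
    _ = _ := by
      congr 1
      ext i j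
      fin_cases i <;> fin_cases j <;> rfl
end

section
/- There is no affine linear map L from complex 3×3 matrices to complex 3×3 matrices (each entry of L(Y) an affine linear function of the 9 entries of Y) such that perm_3(Y) = det_3(L(Y)) for all Y. -/
set_option maxHeartbeats 1000000

open Matrix

/-- The explicit 3×3 permanent. -/
noncomputable def per3 (Y : Matrix (Fin 3) (Fin 3) ℂ) : ℂ :=
  Y 0 0 * Y 1 1 * Y 2 2 + Y 0 0 * Y 1 2 * Y 2 1 + Y 0 1 * Y 1 0 * Y 2 2
  + Y 0 1 * Y 1 2 * Y 2 0 + Y 0 2 * Y 1 0 * Y 2 1 + Y 0 2 * Y 1 1 * Y 2 0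

theorem sum_perm_eq_per3 (Y : Matrix (Fin 3) (Fin 3) ℂ) :
    (∑ σ : Equiv.Perm (Fin 3), ∏ i, Y i (σ i)) = per3 Y := by
  rw [show (Finset.univ : Finset (Equiv.Perm (Fin 3))) =
    {1, Equiv.swap 0 1, Equiv.swap 0 2, Equiv.swap 1 2,
     Equiv.swap 0 1 * Equiv.swap 1 2, Equiv.swap 1 2 * Equiv.swap 0 1} from by decide]
  rw [Finset.sum_insert (by decide), Finset.sum_insert (by decide),
      Finset.sum_insert (by decide), Finset.sum_insert (by decide),
      Finset.sum_insert (by decide), Finset.sum_singleton]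
  simp [Fin.prod_univ_three, Equiv.swap_apply_def, per3]
  ring

/-- Base point: permanent vanishes here but its Hessian is nondegenerate. -/
noncomputable def y₀ : Matrix (Fin 3) (Fin 3) ℂ := !![-2,1,1;1,1,1;1,1,1]

/-- Linear part of the affine map. -/
noncomputable def Am (a : Fin 3 → Fin 3 → Fin 3 → Fin 3 → ℂ)
    (U : Matrix (Fin 3) (Fin 3) ℂ) : Matrix (Fin 3) (Fin 3) ℂ :=
  Matrix.of fun i j => ∑ k, ∑ l, a i j k l * U k l

/-- Second mixed difference of the permanent at `y₀`. -/
noncomputable def Bp (U W : Matrix (Fin 3) (Fin 3) ℂ) : ℂ :=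
  per3 (y₀ + U + W) - per3 (y₀ + U - W) - per3 (y₀ - U + W) + per3 (y₀ - U - W)

/-- Second mixed difference of the determinant at `X`. -/
noncomputable def Bd (X V W : Matrix (Fin 3) (Fin 3) ℂ) : ℂ :=
  det (X + V + W) - det (X + V - W) - det (X - V + W) + det (X - V - W)

lemma Am_add (a : Fin 3 → Fin 3 → Fin 3 → Fin 3 → ℂ) (U W : Matrix (Fin 3) (Fin 3) ℂ) :
    Am a (U + W) = Am a U + Am a W := by
  ext i j
  simp [Am, Finset.sum_add_distrib, mul_add]

lemma Am_sub (a : Fin 3 → Fin 3 → Fin 3 → Fin 3 → ℂ) (U W : Matrix (Fin 3) (Fin 3) ℂ) :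
    Am a (U - W) = Am a U - Am a W := by
  ext i j
  simp [Am, Finset.sum_sub_distrib, mul_sub]

lemma Am_smul (a : Fin 3 → Fin 3 → Fin 3 → Fin 3 → ℂ) (t : ℂ) (U : Matrix (Fin 3) (Fin 3) ℂ) :
    Am a (t • U) = t • Am a U := by
  ext i j
  simp [Am, Finset.mul_sum, Matrix.smul_apply]
  congr 1; ext k; congr 1; ext l; ring

/-- `Am a` as a linear map. -/
noncomputable def AmL (a : Fin 3 → Fin 3 → Fin 3 → Fin 3 → ℂ) :
    Matrix (Fin 3) (Fin 3) ℂ →ₗ[ℂ] Matrix (Fin 3) (Fin 3) ℂ where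
  toFun := Am a
  map_add' := Am_add a
  map_smul' := Am_smul a

/-- Nondegeneracy of the permanent's Hessian at `y₀`. -/
theorem nondeg (U : Matrix (Fin 3) (Fin 3) ℂ) (h : ∀ W, Bp U W = 0) : U = 0 := by
  have h00 := h !![1,0,0;0,0,0;0,0,0]
  have h01 := h !![0,1,0;0,0,0;0,0,0]
  have h02 := h !![0,0,1;0,0,0;0,0,0]
  have h10 := h !![0,0,0;1,0,0;0,0,0]
  have h11 := h !![0,0,0;0,1,0;0,0,0]
  have h12 := h !![0,0,0;0,0,1;0,0,0]
  have h20 := h !![0,0,0;0,0,0;1,0,0]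
  have h21 := h !![0,0,0;0,0,0;0,1,0]
  have h22 := h !![0,0,0;0,0,0;0,0,1]
  simp [Bp, per3, y₀, Matrix.vecHead, Matrix.vecTail] at h00
  simp [Bp, per3, y₀, Matrix.vecHead, Matrix.vecTail] at h01
  simp [Bp, per3, y₀, Matrix.vecHead, Matrix.vecTail] at h02
  simp [Bp, per3, y₀, Matrix.vecHead, Matrix.vecTail] at h10
  simp [Bp, per3, y₀, Matrix.vecHead, Matrix.vecTail] at h11
  simp [Bp, per3, y₀, Matrix.vecHead, Matrix.vecTail] at h12
  simp [Bp, per3, y₀, Matrix.vecHead, Matrix.vecTail] at h20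
  simp [Bp, per3, y₀, Matrix.vecHead, Matrix.vecTail] at h21
  simp [Bp, per3, y₀, Matrix.vecHead, Matrix.vecTail] at h22
  have e00 : U 0 0 = 0 := by
    linear_combination (1/4 : ℂ) * h00 + (-1/16 : ℂ) * h01 + (-1/16 : ℂ) * h02 + (-1/16 : ℂ) * h10 + (1/16 : ℂ) * h11 + (1/16 : ℂ) * h12 + (-1/16 : ℂ) * h20 + (1/16 : ℂ) * h21 + (1/16 : ℂ) * h22
  have e01 : U 0 1 = 0 := by
    linear_combination (-1/16 : ℂ) * h00 + (-1/8 : ℂ) * h01 + (1/8 : ℂ) * h02 + (1/16 : ℂ) * h10 + (-1/16 : ℂ) * h11 + (1/16 : ℂ) * h12 + (1/16 : ℂ) * h20 + (-1/16 : ℂ) * h21 + (1/16 : ℂ) * h22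
  have e02 : U 0 2 = 0 := by
    linear_combination (-1/16 : ℂ) * h00 + (1/8 : ℂ) * h01 + (-1/8 : ℂ) * h02 + (1/16 : ℂ) * h10 + (1/16 : ℂ) * h11 + (-1/16 : ℂ) * h12 + (1/16 : ℂ) * h20 + (1/16 : ℂ) * h21 + (-1/16 : ℂ) * h22
  have e10 : U 1 0 = 0 := by
    linear_combination (-1/16 : ℂ) * h00 + (1/16 : ℂ) * h01 + (1/16 : ℂ) * h02 + (-1/8 : ℂ) * h10 + (-1/16 : ℂ) * h11 + (-1/16 : ℂ) * h12 + (1/8 : ℂ) * h20 + (1/16 : ℂ) * h21 + (1/16 : ℂ) * h22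
  have e11 : U 1 1 = 0 := by
    linear_combination (1/16 : ℂ) * h00 + (-1/16 : ℂ) * h01 + (1/16 : ℂ) * h02 + (-1/16 : ℂ) * h10 + (-1/32 : ℂ) * h11 + (1/32 : ℂ) * h12 + (1/16 : ℂ) * h20 + (1/32 : ℂ) * h21 + (-1/32 : ℂ) * h22
  have e12 : U 1 2 = 0 := by
    linear_combination (1/16 : ℂ) * h00 + (1/16 : ℂ) * h01 + (-1/16 : ℂ) * h02 + (-1/16 : ℂ) * h10 + (1/32 : ℂ) * h11 + (-1/32 : ℂ) * h12 + (1/16 : ℂ) * h20 + (-1/32 : ℂ) * h21 + (1/32 : ℂ) * h22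
  have e20 : U 2 0 = 0 := by
    linear_combination (-1/16 : ℂ) * h00 + (1/16 : ℂ) * h01 + (1/16 : ℂ) * h02 + (1/8 : ℂ) * h10 + (1/16 : ℂ) * h11 + (1/16 : ℂ) * h12 + (-1/8 : ℂ) * h20 + (-1/16 : ℂ) * h21 + (-1/16 : ℂ) * h22
  have e21 : U 2 1 = 0 := by
    linear_combination (1/16 : ℂ) * h00 + (-1/16 : ℂ) * h01 + (1/16 : ℂ) * h02 + (1/16 : ℂ) * h10 + (1/32 : ℂ) * h11 + (-1/32 : ℂ) * h12 + (-1/16 : ℂ) * h20 + (-1/32 : ℂ) * h21 + (1/32 : ℂ) * h22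
  have e22 : U 2 2 = 0 := by
    linear_combination (1/16 : ℂ) * h00 + (1/16 : ℂ) * h01 + (-1/16 : ℂ) * h02 + (1/16 : ℂ) * h10 + (-1/32 : ℂ) * h11 + (1/32 : ℂ) * h12 + (-1/16 : ℂ) * h20 + (1/32 : ℂ) * h21 + (-1/32 : ℂ) * h22
  ext i j
  fin_cases i <;> fin_cases j <;> simp only [Matrix.zero_apply] <;> assumption

lemma Bd_zeroV (X W : Matrix (Fin 3) (Fin 3) ℂ) : Bd X 0 W = 0 := by
  simp only [Bd, add_zero, sub_zero]
  ring

lemma Bd_conj (P Q X V W : Matrix (Fin 3) (Fin 3) ℂ) :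
    Bd (P * X * Q) (P * V * Q) (P * W * Q) = det P * det Q * Bd X V W := by
  have h1 : P * X * Q + P * V * Q + P * W * Q = P * (X + V + W) * Q := by noncomm_ring
  have h2 : P * X * Q + P * V * Q - P * W * Q = P * (X + V - W) * Q := by noncomm_ring
  have h3 : P * X * Q - P * V * Q + P * W * Q = P * (X - V + W) * Q := by noncomm_ring
  have h4 : P * X * Q - P * V * Q - P * W * Q = P * (X - V - W) * Q := by noncomm_ring
  rw [Bd, h1, h2, h3, h4, Bd]
  simp only [det_mul]
  ring

lemma Bd_block (X W : Matrix (Fin 3) (Fin 3) ℂ) (hr : ∀ j, X 2 j = 0) (hc : ∀ i, X i 2 = 0) :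
    Bd X !![X 1 0, X 1 1, 0; X 0 0, X 0 1, 0; 0,0,0] W = 0 := by
  simp [Bd, Matrix.det_fin_three, Matrix.vecHead, Matrix.vecTail, hr, hc]
  ring_nf

/-- Completing a nonzero vector to an invertible matrix (as third column). -/
lemma col_ext (w : Fin 3 → ℂ) (hw : w ≠ 0) :
    ∃ Q : Matrix (Fin 3) (Fin 3) ℂ, det Q ≠ 0 ∧ ∀ i, Q i 2 = w i := by
  have hex : ∃ i, w i ≠ 0 := by
    by_contra hcon
    push_neg at hcon
    exact hw (funext hcon)
  obtain ⟨i, hi⟩ := hex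
  fin_cases i
  · refine ⟨!![0,0,w 0; 1,0,w 1; 0,1,w 2], ?_, ?_⟩
    · simp [Matrix.det_fin_three, Matrix.vecHead, Matrix.vecTail]
      exact hi
    · intro i; fin_cases i <;> simp [Matrix.vecHead, Matrix.vecTail]
  · refine ⟨!![1,0,w 0; 0,0,w 1; 0,1,w 2], ?_, ?_⟩
    · simp [Matrix.det_fin_three, Matrix.vecHead, Matrix.vecTail]
      exact hi
    · intro i; fin_cases i <;> simp [Matrix.vecHead, Matrix.vecTail]
  · refine ⟨!![1,0,w 0; 0,1,w 1; 0,0,w 2], ?_, ?_⟩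
    · simp [Matrix.det_fin_three, Matrix.vecHead, Matrix.vecTail]
      exact hi
    · intro i; fin_cases i <;> simp [Matrix.vecHead, Matrix.vecTail]

lemma row_ext (u : Fin 3 → ℂ) (hu : u ≠ 0) :
    ∃ P : Matrix (Fin 3) (Fin 3) ℂ, det P ≠ 0 ∧ ∀ j, P 2 j = u j := by
  obtain ⟨Q, hQ, hQc⟩ := col_ext u hu
  refine ⟨Qᵀ, by rwa [Matrix.det_transpose], fun j => hQc j⟩

/-- Any singular matrix has a nonzero radical direction for `Bd`. -/
lemma exists_radical (X : Matrix (Fin 3) (Fin 3) ℂ) (hdet : det X = 0) :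
    ∃ V : Matrix (Fin 3) (Fin 3) ℂ, V ≠ 0 ∧ ∀ W, Bd X V W = 0 := by
  by_cases hX0 : X = 0
  · refine ⟨!![1,0,0;0,0,0;0,0,0], ?_, ?_⟩
    · intro hcon
      have := congrFun (congrFun hcon 0) 0
      simp at this
    · intro W
      subst hX0
      have h1 : (0 : Matrix (Fin 3) (Fin 3) ℂ) - !![1,0,0;0,0,0;0,0,0] + W
          = -(!![1,0,0;0,0,0;0,0,0] - W) := by abel
      have h2 : (0 : Matrix (Fin 3) (Fin 3) ℂ) - !![1,0,0;0,0,0;0,0,0] - W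
          = -(!![1,0,0;0,0,0;0,0,0] + W) := by abel
      simp only [Bd, zero_add, h1, h2, Matrix.det_neg]
      norm_num
  · -- right and left kernel vectors
    obtain ⟨w, hwne, hw⟩ := (Matrix.exists_mulVec_eq_zero_iff).mpr hdet
    have hdetT : det Xᵀ = 0 := by rwa [Matrix.det_transpose]
    obtain ⟨u, hune, hu⟩ := (Matrix.exists_mulVec_eq_zero_iff).mpr hdetT
    obtain ⟨Q, hQdet, hQc⟩ := col_ext w hwne
    obtain ⟨P, hPdet, hPr⟩ := row_ext u hune
    have hPu : IsUnit (det P) := isUnit_iff_ne_zero.mpr hPdet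
    have hQu : IsUnit (det Q) := isUnit_iff_ne_zero.mpr hQdet
    set X₁ := P * X * Q with hX₁def
    -- third row of X₁ vanishes
    have huX : ∀ m, (∑ k, X k m * u k) = 0 := by
      intro m
      simpa [Matrix.mulVec, dotProduct] using congrFun hu m
    have hXw : ∀ k, (∑ m, X k m * w m) = 0 := by
      intro k
      simpa [Matrix.mulVec, dotProduct] using congrFun hw k
    have hr : ∀ j, X₁ 2 j = 0 := by
      intro j
      calc X₁ 2 j = ∑ k, ∑ m, X k m * u k * Q m j := by
            rw [hX₁def, Matrix.mul_assoc, Matrix.mul_apply]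
            apply Finset.sum_congr rfl
            intro k _
            rw [hPr k, Matrix.mul_apply, Finset.mul_sum]
            apply Finset.sum_congr rfl
            intro m _
            ring
        _ = ∑ m, (∑ k, X k m * u k) * Q m j := by
            rw [Finset.sum_comm]
            apply Finset.sum_congr rfl
            intro m _
            rw [Finset.sum_mul]
        _ = 0 := by simp [huX]
    -- third column of X₁ vanishes
    have hc : ∀ i, X₁ i 2 = 0 := by
      intro i
      calc X₁ i 2 = ∑ m, ∑ k, P i k * X k m * w m := by
            rw [hX₁def, Matrix.mul_apply]
            apply Finset.sum_congr rfl
            intro m _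
            rw [hQc m, Matrix.mul_apply, Finset.sum_mul]
        _ = ∑ k, P i k * (∑ m, X k m * w m) := by
            rw [Finset.sum_comm]
            apply Finset.sum_congr rfl
            intro k _
            rw [Finset.mul_sum]
            apply Finset.sum_congr rfl
            intro m _
            ring
        _ = 0 := by simp [hXw]
    have hcancel : ∀ M : Matrix (Fin 3) (Fin 3) ℂ, P⁻¹ * (P * M * Q) * Q⁻¹ = M := by
      intro M
      rw [show P * M * Q = P * (M * Q) from Matrix.mul_assoc _ _ _, ← Matrix.mul_assoc P⁻¹,
        Matrix.nonsing_inv_mul P hPu, one_mul, Matrix.mul_assoc,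
        Matrix.mul_nonsing_inv Q hQu, mul_one]
    have hcancel' : ∀ M : Matrix (Fin 3) (Fin 3) ℂ, P * (P⁻¹ * M * Q⁻¹) * Q = M := by
      intro M
      rw [show P⁻¹ * M * Q⁻¹ = P⁻¹ * (M * Q⁻¹) from Matrix.mul_assoc _ _ _,
        ← Matrix.mul_assoc P, Matrix.mul_nonsing_inv P hPu, one_mul, Matrix.mul_assoc,
        Matrix.nonsing_inv_mul Q hQu, mul_one]
    have hX₁ne : X₁ ≠ 0 := by
      intro hcon
      apply hX0
      have := hcancel X
      rw [← hX₁def] at this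
      rw [hcon] at this
      simpa using this.symm
    set V₁ : Matrix (Fin 3) (Fin 3) ℂ := !![X₁ 1 0, X₁ 1 1, 0; X₁ 0 0, X₁ 0 1, 0; 0,0,0]
      with hV₁def
    have hV₁ne : V₁ ≠ 0 := by
      intro hcon
      apply hX₁ne
      have c00 := congrFun (congrFun hcon 1) 0
      have c01 := congrFun (congrFun hcon 1) 1
      have c10 := congrFun (congrFun hcon 0) 0
      have c11 := congrFun (congrFun hcon 0) 1
      simp [hV₁def, Matrix.vecHead, Matrix.vecTail] at c00 c01 c10 c11
      ext i j
      fin_cases i <;> fin_cases j <;>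
        simp only [Matrix.zero_apply] <;>
        first
          | exact c00 | exact c01 | exact c10 | exact c11
          | exact hr 0 | exact hr 1 | exact hr 2
          | exact hc 0 | exact hc 1 | exact hc 2
    refine ⟨P⁻¹ * V₁ * Q⁻¹, ?_, ?_⟩
    · intro hcon
      apply hV₁ne
      have := hcancel' V₁
      rw [hcon] at this
      simpa using this.symm
    · intro W
      have hconj := Bd_conj P Q X (P⁻¹ * V₁ * Q⁻¹) W
      rw [hcancel' V₁, ← hX₁def] at hconj
      have hblock := Bd_block X₁ (P * W * Q) hr hc
      rw [← hV₁def] at hblock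
      rw [hblock] at hconj
      have := hconj.symm
      rcases mul_eq_zero.mp this with h | h
      · rcases mul_eq_zero.mp h with h' | h'
        · exact absurd h' hPdet
        · exact absurd h' hQdet
      · exact h

/-- Marcus–Minc for m = 3: there is no affine linear map `L` from 3×3 matrices
to 3×3 matrices (each entry of `L Y` an affine linear function of the 9 entries
of `Y`) such that `perm₃ Y = det₃ (L Y)` for all `Y`. -/
theorem no_affine_projection_perm_three_to_det_three :
    ¬ ∃ (a : Fin 3 → Fin 3 → Fin 3 → Fin 3 → ℂ) (c : Matrix (Fin 3) (Fin 3) ℂ),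
      ∀ Y : Matrix (Fin 3) (Fin 3) ℂ,
        (∑ σ : Equiv.Perm (Fin 3), ∏ i, Y i (σ i)) =
          Matrix.det (Matrix.of fun i j => c i j + ∑ k, ∑ l, a i j k l * Y k l) := by
  rintro ⟨a, c, h⟩
  have h' : ∀ Y, per3 Y = det (c + Am a Y) := by
    intro Y
    rw [← sum_perm_eq_per3, h Y]
    congr 1
  set X₀ := c + Am a y₀ with hX₀def
  have hdet0 : det X₀ = 0 := by
    have h0 := h' y₀
    rw [← hX₀def] at h0
    norm_num [per3, y₀, Matrix.vecHead, Matrix.vecTail] at h0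
    exact h0.symm.trans (by simp [Matrix.cons_val]; norm_num)
  have key : ∀ U W, Bp U W = Bd X₀ (Am a U) (Am a W) := by
    intro U W
    have r1 : c + Am a (y₀ + U + W) = X₀ + Am a U + Am a W := by
      rw [Am_add, Am_add, hX₀def]; abel
    have r2 : c + Am a (y₀ + U - W) = X₀ + Am a U - Am a W := by
      rw [Am_sub, Am_add, hX₀def]; abel
    have r3 : c + Am a (y₀ - U + W) = X₀ - Am a U + Am a W := by
      rw [Am_add, Am_sub, hX₀def]; abel
    have r4 : c + Am a (y₀ - U - W) = X₀ - Am a U - Am a W := by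
      rw [Am_sub, Am_sub, hX₀def]; abel
    rw [Bp, h' (y₀ + U + W), h' (y₀ + U - W), h' (y₀ - U + W), h' (y₀ - U - W),
      r1, r2, r3, r4, Bd]
  have hinj : Function.Injective (AmL a) := by
    intro U V hUV
    have hz : Am a (U - V) = 0 := by
      have : AmL a (U - V) = 0 := by rw [map_sub, hUV, sub_self]
      exact this
    have : U - V = 0 := by
      apply nondeg
      intro W
      rw [key (U - V) W, hz]
      exact Bd_zeroV X₀ (Am a W)
    exact sub_eq_zero.mp this
  have hsurj : Function.Surjective (AmL a) :=
    (LinearMap.injective_iff_surjective).mp hinj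
  obtain ⟨V, hVne, hVW⟩ := exists_radical X₀ hdet0
  obtain ⟨U₀, hU₀⟩ := hsurj V
  have hU₀ne : U₀ ≠ 0 := by
    intro hcon
    apply hVne
    rw [← hU₀, hcon, map_zero]
  apply hU₀ne
  apply nondeg
  intro W
  have : Am a U₀ = V := hU₀
  rw [key U₀ W, this]
  exact hVW (Am a W)
end

section
/- Let x be the m×m matrix whose (1,1) entry is 1−m and all other entries are 1. Then the Hessian matrix of second partial derivatives of perm_m evaluated at x is an invertible m²×m² matrix (i.e. has maximal rank m²). -/
/-!
Each second partial derivative of `perm_m` is the permanent of an `(m-2) × (m-2)` minor, so at the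
point `x` it counts permutations. Writing `A = J - 1` for the matrix with zero diagonal and ones
elsewhere, and `B` for `A` with its first row and column set to zero, the Hessian is
`α A ⊗ A - β B ⊗ B` with `α = (m-2)!` and `β = m (m-3)!`. With `C = A⁻¹ B` this factors as
`(A ⊗ A) (α - β C ⊗ C)`, and a rank-one computation gives `C³ = C²`. So `C ⊗ C` has eigenvalues in
`{0, 1}`, and `α - β C ⊗ C` is invertible because `α ≠ 0` and `α ≠ β`.
-/

open MvPolynomial Finset Equiv Matrix Kronecker

namespace MvPolynomial

variable {R ι κ : Type*} [CommSemiring R] [DecidableEq ι] [DecidableEq κ]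

theorem pderiv_prod_X_graph (f : ι → κ) (s : Finset ι) (p : ι × κ) :
    pderiv p (∏ i ∈ s, (X (i, f i) : MvPolynomial (ι × κ) R)) =
      if p.1 ∈ s ∧ f p.1 = p.2 then ∏ i ∈ s.erase p.1, X (i, f i) else 0 := by
  induction s using Finset.induction_on with
  | empty => simp
  | insert c t hc ih =>
    rw [prod_insert hc, pderiv_mul, ih, pderiv_X]
    by_cases hpc : p.1 = c
    · subst hpc
      by_cases hf : f p.1 = p.2 <;> simp [hc, hf, Prod.ext_iff]
    · simp [hpc, Prod.ext_iff, erase_insert_of_ne (Ne.symm hpc),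
        prod_insert (fun h => hc (mem_of_mem_erase h))]

end MvPolynomial

namespace Equiv.Perm

variable {α : Type*} [Fintype α] [DecidableEq α]

theorem card_eqOn (s : Finset α) (f : α → α) (hf : Set.InjOn f s) :
    #{σ : Perm α | ∀ a ∈ s, σ a = f a} = (Fintype.card α - #s).factorial := by
  obtain ⟨g, hg⟩ := Finset.exists_equiv_extend_of_card_eq (t := univ) card_univ.symm
    (subset_univ _) hf
  set τ : Perm α := g.trans (subtypeUnivEquiv mem_univ)
  have hτ : ∀ a ∈ s, τ a = f a := hg
  have hτ' : ∀ a ∈ s, τ⁻¹ (f a) = a := fun a ha => by rw [← hτ a ha, Perm.inv_def, symm_apply_apply]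
  calc #{σ : Perm α | ∀ a ∈ s, σ a = f a}
      = #{ρ : Perm α | ∀ a ∈ s, ρ a = a} := by
        refine card_bij' (fun σ _ => τ⁻¹ * σ) (fun ρ _ => τ * ρ) ?_ ?_ ?_ ?_ <;>
          simp +contextual [Perm.mul_apply, hτ, hτ']
    _ = Fintype.card (Perm {a // a ∉ s}) := by
        rw [← Fintype.card_subtype]
        exact Fintype.card_congr ((Perm.subtypeEquivSubtypePerm (· ∉ s)).trans
          (subtypeEquivRight (by simp))).symm
    _ = (Fintype.card α - #s).factorial := by
        rw [Fintype.card_perm, Fintype.card_subtype_compl, Fintype.card_coe]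

theorem card_apply_eq_and_apply_eq {i k : α} (j l : α) (hik : i ≠ k) :
    #{σ : Perm α | σ i = j ∧ σ k = l} = if j = l then 0 else (Fintype.card α - 2).factorial := by
  split_ifs with hjl
  · subst hjl
    refine card_eq_zero.mpr (filter_eq_empty_iff.mpr fun σ _ h => ?_)
    exact hik (σ.injective (h.1.trans h.2.symm))
  · have hf : Set.InjOn (fun a => if a = i then j else l) ({i, k} : Finset α) := by
      simp [Set.InjOn, hik.symm, hjl, Ne.symm hjl]
    rw [← card_pair hik, ← card_eqOn _ _ hf]
    congr 1
    ext σ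
    simp [hik.symm]

theorem card_apply_eq_and_apply_eq_and_apply_eq {i k z : α} (j l w : α) (hik : i ≠ k)
    (hiz : i ≠ z) (hkz : k ≠ z) :
    #{σ : Perm α | σ i = j ∧ σ k = l ∧ σ z = w} =
      if j = l ∨ j = w ∨ l = w then 0 else (Fintype.card α - 3).factorial := by
  split_ifs with hjlw
  · refine card_eq_zero.mpr (filter_eq_empty_iff.mpr fun σ _ ⟨h1, h2, h3⟩ => ?_)
    rcases hjlw with rfl | rfl | rfl
    exacts [hik (σ.injective (h1.trans h2.symm)), hiz (σ.injective (h1.trans h3.symm)),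
      hkz (σ.injective (h2.trans h3.symm))]
  · push Not at hjlw
    obtain ⟨hjl, hjw, hlw⟩ := hjlw
    have hf : Set.InjOn (fun a => if a = i then j else if a = k then l else w)
        ({i, k, z} : Finset α) := by
      simp [Set.InjOn, hik.symm, hiz.symm, hkz.symm, hjl, hjw, hlw, Ne.symm hjl, Ne.symm hjw,
        Ne.symm hlw]
    have hcard : #({i, k, z} : Finset α) = 3 := by
      rw [card_insert_of_notMem (by simp [hik, hiz]), card_pair hkz]
    rw [← hcard, ← card_eqOn _ _ hf]
    congr 1
    ext σ
    simp [hik.symm, hiz.symm, hkz.symm]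

end Equiv.Perm

theorem Nat.factorial_sub_two_ne_mul_factorial_sub_three {N : ℕ} (hN : 2 ≤ N) :
    (N - 2).factorial ≠ N * (N - 3).factorial := by
  obtain ⟨k, rfl⟩ := Nat.exists_eq_add_of_le hN
  rcases k with _ | k
  · simp
  · rw [show 2 + (k + 1) - 2 = k + 1 by omega, show 2 + (k + 1) - 3 = k by omega,
      Nat.factorial_succ]
    exact (Nat.mul_lt_mul_of_pos_right (by omega) (Nat.factorial_pos k)).ne

/-- The inverse is `(a - b X)⁻¹ = a⁻¹ + b a⁻² X + b² a⁻² (a - b)⁻¹ X²` modulo `X² (X - 1)`. -/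
theorem isUnit_smul_one_sub_smul_of_pow_three_eq_sq {K R : Type*} [Field K] [Ring R]
    [Algebra K R] {D : R} (hD : D ^ 3 = D ^ 2) {a b : K} (ha : a ≠ 0) (hab : a ≠ b) :
    IsUnit (a • 1 - b • D) := by
  have hab' : a - b ≠ 0 := sub_ne_zero.mpr hab
  have hDD : D * D = D ^ 2 := (sq D).symm
  have hD_sq : D * D ^ 2 = D ^ 2 := by rw [← pow_succ', hD]
  have hsq_D : D ^ 2 * D = D ^ 2 := by rw [← pow_succ, hD]
  let N : R := a⁻¹ • 1 + (b / a ^ 2) • D + (b ^ 2 / (a ^ 2 * (a - b))) • D ^ 2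
  refine ⟨⟨a • 1 - b • D, N, ?_, ?_⟩, rfl⟩ <;>
  · simp only [N, mul_add, add_mul, mul_sub, sub_mul, smul_mul_smul_comm, one_mul, mul_one, hDD,
      hD_sq, hsq_D]
    match_scalars <;> field_simp <;> ring

namespace Matrix

theorem kronecker_pow {R m n : Type*} [CommSemiring R] [Fintype m] [Fintype n] [DecidableEq m]
    [DecidableEq n] (A : Matrix m m R) (B : Matrix n n R) (k : ℕ) :
    (A ⊗ₖ B) ^ k = (A ^ k) ⊗ₖ (B ^ k) := by
  induction k with
  | zero => simp
  | succ k ih => rw [pow_succ, ih, ← mul_kronecker_mul, pow_succ, pow_succ]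

variable {α n : Type*} [Fintype n] [DecidableEq n]

theorem diagonal_mul_vecMulVec [NonUnitalSemiring α] (d a b : n → α) :
    diagonal d * vecMulVec a b = vecMulVec (fun i => d i * a i) b := by
  rw [mul_vecMulVec]
  congr 1
  ext
  exact mulVec_diagonal ..

theorem vecMulVec_mul_diagonal [NonUnitalSemiring α] (d a b : n → α) :
    vecMulVec a b * diagonal d = vecMulVec a (fun i => b i * d i) := by
  rw [vecMulVec_mul]
  congr 1
  ext
  exact vecMul_diagonal ..

theorem isUnit_smul_kronecker_sub_smul_kronecker {K : Type*} [Field K] {A B : Matrix n n K}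
    (hA : IsUnit A) (hC : (A⁻¹ * B) ^ 3 = (A⁻¹ * B) ^ 2) {a b : K} (ha : a ≠ 0) (hab : a ≠ b) :
    IsUnit (a • (A ⊗ₖ A) - b • (B ⊗ₖ B)) := by
  set C := A⁻¹ * B
  have hAdet := (isUnit_iff_isUnit_det A).mp hA
  have hB : B = A * C := (mul_nonsing_inv_cancel_left A B hAdet).symm
  have hAA : IsUnit (A ⊗ₖ A) := by
    rw [isUnit_iff_isUnit_det, det_kronecker]
    exact (hAdet.pow _).mul (hAdet.pow _)
  have hfactor : a • (A ⊗ₖ A) - b • (B ⊗ₖ B) = (A ⊗ₖ A) * (a • 1 - b • (C ⊗ₖ C)) := by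
    rw [hB, mul_kronecker_mul, Matrix.mul_sub, Matrix.mul_smul, Matrix.mul_smul, Matrix.mul_one]
  rw [hfactor]
  exact hAA.mul (isUnit_smul_one_sub_smul_of_pow_three_eq_sq
    (by rw [kronecker_pow, kronecker_pow, hC]) ha hab)

end Matrix

namespace PermanentHessian

noncomputable def permanentPoly (n R : Type*) [Fintype n] [DecidableEq n] [CommSemiring R] :
    MvPolynomial (n × n) R :=
  ∑ σ : Perm n, ∏ i, X (i, σ i)

noncomputable def hessian {σ R : Type*} [CommSemiring R] (f : MvPolynomial σ R) (x : σ → R) :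
    Matrix σ σ R :=
  Matrix.of fun p q => eval x (pderiv p (pderiv q f))

section CommRing

variable {R n : Type*} [CommRing R] [Fintype n] [DecidableEq n]

theorem hessian_permanentPoly_apply (x : n × n → R) (p q : n × n) :
    hessian (permanentPoly n R) x p q = ∑ σ : Perm n,
      if p.1 ≠ q.1 ∧ σ p.1 = p.2 ∧ σ q.1 = q.2 then ∏ i ∈ (univ.erase q.1).erase p.1, x (i, σ i)
      else 0 := by
  simp only [hessian, permanentPoly, Matrix.of_apply, map_sum]
  refine sum_congr rfl fun σ _ => ?_
  rw [pderiv_prod_X_graph]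
  by_cases hq : σ q.1 = q.2
  · simp only [mem_univ, hq, and_self, if_true, pderiv_prod_X_graph, mem_erase]
    split_ifs <;> simp_all [map_prod]
  · simp [hq]

/-- The point `x` of the theorem, with the distinguished index `o` in place of `1`. -/
def cornerPoint (o : n) : n × n → R :=
  fun p => if p.1 = o ∧ p.2 = o then 1 - (Fintype.card n : R) else 1

theorem prod_cornerPoint (o : n) (σ : Perm n) (s : Finset n) :
    ∏ i ∈ s, cornerPoint (R := R) o (i, σ i) =
      if o ∈ s ∧ σ o = o then 1 - (Fintype.card n : R) else 1 := by
  have hfactor : ∀ i, cornerPoint (R := R) o (i, σ i) =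
      if o = i then (if σ o = o then 1 - (Fintype.card n : R) else 1) else 1 := by
    intro i
    by_cases h : o = i <;> simp [cornerPoint, h, eq_comm]
  simp only [hfactor, prod_ite_eq]
  split_ifs <;> simp_all

theorem hessian_permanentPoly_cornerPoint_apply (o : n) (i j k l : n) :
    hessian (permanentPoly n R) (cornerPoint o) (i, j) (k, l) =
      if i = k ∨ j = l then 0 else
        ((Fintype.card n - 2).factorial : R) -
          if i = o ∨ k = o ∨ j = o ∨ l = o then 0
          else Fintype.card n * (Fintype.card n - 3).factorial := by
  rw [hessian_permanentPoly_apply]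
  by_cases hik : i = k
  · simp [hik]
  have hterm : ∀ σ : Perm n,
      (if i ≠ k ∧ σ i = j ∧ σ k = l then ∏ a ∈ (univ.erase k).erase i, cornerPoint o (a, σ a)
        else 0) =
      (if σ i = j ∧ σ k = l then (1 : R) else 0) -
        Fintype.card n * (if σ i = j ∧ σ k = l ∧ (o ≠ i ∧ o ≠ k) ∧ σ o = o then 1 else 0) := by
    intro σ
    simp only [prod_cornerPoint, mem_erase, mem_univ, and_true]
    split_ifs <;> simp_all
  simp only [hterm, sum_sub_distrib, ← mul_sum, sum_boole, Perm.card_apply_eq_and_apply_eq _ _ hik]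
  by_cases hio : i = o ∨ k = o
  · have hempty : #{σ : Perm n | σ i = j ∧ σ k = l ∧ (o ≠ i ∧ o ≠ k) ∧ σ o = o} = 0 :=
      card_eq_zero.mpr (filter_eq_empty_iff.mpr fun σ _ h => by
        rcases hio with rfl | rfl <;> simp_all)
    rw [hempty]
    split_ifs <;> simp_all
  · push Not at hio
    have hfilter : #{σ : Perm n | σ i = j ∧ σ k = l ∧ (o ≠ i ∧ o ≠ k) ∧ σ o = o} =
        #{σ : Perm n | σ i = j ∧ σ k = l ∧ σ o = o} := by
      simp only [Ne.symm hio.1, Ne.symm hio.2, ne_eq, not_false_eq_true, and_self, true_and]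
    rw [hfilter, Perm.card_apply_eq_and_apply_eq_and_apply_eq _ _ _ hik hio.1 hio.2]
    split_ifs <;> simp_all

def offDiag (w : n → R) : Matrix n n R := vecMulVec w w - diagonal w

def puncture (o : n) : n → R := fun i => if i = o then 0 else 1

omit [Fintype n] in
theorem offDiag_one_apply (i k : n) : offDiag (1 : n → R) i k = if i = k then 0 else 1 := by
  by_cases h : i = k <;> simp [offDiag, h]

omit [Fintype n] in
theorem offDiag_puncture_apply (o i k : n) :
    offDiag (puncture (R := R) o) i k = if i = k ∨ i = o ∨ k = o then 0 else 1 := by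
  by_cases h : i = k <;> by_cases hi : i = o <;> by_cases hk : k = o <;>
    simp [offDiag, puncture, vecMulVec_apply, diagonal_apply, h, hi, hk]

theorem hessian_permanentPoly_cornerPoint (o : n) :
    hessian (permanentPoly n R) (cornerPoint o) =
      ((Fintype.card n - 2).factorial : R) • (offDiag 1 ⊗ₖ offDiag 1) -
        ((Fintype.card n * (Fintype.card n - 3).factorial : ℕ) : R) •
          (offDiag (puncture o) ⊗ₖ offDiag (puncture o)) := by
  ext ⟨i, j⟩ ⟨k, l⟩
  rw [hessian_permanentPoly_cornerPoint_apply]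
  simp only [Matrix.sub_apply, Matrix.smul_apply, kronecker_apply, offDiag_one_apply,
    offDiag_puncture_apply, smul_eq_mul]
  split_ifs <;> simp_all

end CommRing

section Field

variable {K n : Type*} [Field K] [Fintype n] [DecidableEq n] (o : n)

omit [Fintype n] in
theorem puncture_mul_self (i : n) : puncture (R := K) o i * puncture o i = puncture o i := by
  simp [puncture]

omit [DecidableEq n] in
theorem one_dotProduct_one : (1 : n → K) ⬝ᵥ 1 = Fintype.card n := by
  simp [dotProduct]

theorem one_dotProduct_puncture : (1 : n → K) ⬝ᵥ puncture o = Fintype.card n - 1 := by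
  have : Nonempty n := ⟨o⟩
  simp [dotProduct, puncture, Finset.sum_ite, Finset.filter_ne', Nat.cast_sub Fintype.card_pos]

theorem puncture_dotProduct_one : puncture o ⬝ᵥ (1 : n → K) = Fintype.card n - 1 := by
  rw [dotProduct_comm, one_dotProduct_puncture]

theorem puncture_dotProduct_puncture :
    puncture o ⬝ᵥ (puncture o : n → K) = Fintype.card n - 1 := by
  rw [← puncture_dotProduct_one o]
  simp only [dotProduct, puncture_mul_self, Pi.one_apply, mul_one]

variable {o}

theorem offDiag_one_mul (hn : (Fintype.card n : K) ≠ 1) :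
    offDiag (1 : n → K) * (((Fintype.card n : K) - 1)⁻¹ • vecMulVec 1 1 - 1) = 1 := by
  have h : (Fintype.card n : K) - 1 ≠ 0 := sub_ne_zero.mpr hn
  simp only [offDiag, diagonal_one', Matrix.mul_sub, Matrix.sub_mul, Matrix.mul_smul,
    vecMulVec_mul_vecMulVec, one_dotProduct_one, Matrix.mul_one, Matrix.one_mul, vecMulVec_smul]
  match_scalars <;> simp [h]

theorem isUnit_offDiag_one (hn : (Fintype.card n : K) ≠ 1) : IsUnit (offDiag (1 : n → K)) :=
  (isUnit_iff_isUnit_det _).mpr (isUnit_det_of_right_inverse (offDiag_one_mul hn))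

theorem inv_offDiag_one_mul_sq (hn : (Fintype.card n : K) ≠ 1) :
    ((offDiag (1 : n → K))⁻¹ * offDiag (puncture o)) ^ 2 =
      diagonal (puncture o) -
        ((Fintype.card n : K) - 1)⁻¹ • vecMulVec (puncture o) (puncture o) := by
  have h : (Fintype.card n : K) - 1 ≠ 0 := sub_ne_zero.mpr hn
  rw [inv_eq_right_inv (offDiag_one_mul hn), sq]
  simp only [offDiag, Matrix.mul_sub, Matrix.sub_mul, Matrix.mul_smul, Matrix.smul_mul,
    vecMulVec_mul_vecMulVec, vecMulVec_smul, diagonal_mul_vecMulVec,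
    vecMulVec_mul_diagonal, diagonal_mul_diagonal, Pi.one_apply, one_mul, mul_one,
    puncture_mul_self, one_dotProduct_puncture, puncture_dotProduct_one,
    puncture_dotProduct_puncture]
  match_scalars <;> field_simp <;> ring

theorem inv_offDiag_one_mul_pow_three (hn : (Fintype.card n : K) ≠ 1) :
    ((offDiag (1 : n → K))⁻¹ * offDiag (puncture o)) ^ 3 =
      ((offDiag (1 : n → K))⁻¹ * offDiag (puncture o)) ^ 2 := by
  have h : (Fintype.card n : K) - 1 ≠ 0 := sub_ne_zero.mpr hn
  rw [pow_succ', inv_offDiag_one_mul_sq hn, inv_eq_right_inv (offDiag_one_mul hn)]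
  simp only [offDiag, Matrix.mul_sub, Matrix.sub_mul, Matrix.mul_smul, Matrix.smul_mul,
    vecMulVec_mul_vecMulVec, vecMulVec_smul, diagonal_mul_vecMulVec, vecMulVec_mul_diagonal,
    diagonal_mul_diagonal, Pi.one_apply, one_mul, puncture_mul_self, one_dotProduct_puncture,
    puncture_dotProduct_puncture]
  match_scalars <;> field_simp <;> ring

variable (o) in
theorem det_hessian_permanentPoly_cornerPoint_ne_zero [CharZero K]
    (hn : 2 ≤ Fintype.card n) : (hessian (permanentPoly n K) (cornerPoint o)).det ≠ 0 := by
  have hn1 : (Fintype.card n : K) ≠ 1 := by exact_mod_cast (by omega : Fintype.card n ≠ 1)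
  rw [hessian_permanentPoly_cornerPoint]
  refine ((isUnit_iff_isUnit_det _).mp (isUnit_smul_kronecker_sub_smul_kronecker
    (isUnit_offDiag_one hn1) (inv_offDiag_one_mul_pow_three hn1) ?_ ?_)).ne_zero
  · exact_mod_cast Nat.factorial_ne_zero _
  · exact_mod_cast Nat.factorial_sub_two_ne_mul_factorial_sub_three hn

end Field

end PermanentHessian

/-- At the point `x` with `(1,1)` entry `1 - m` and all other entries `1`, the
Hessian matrix of second partial derivatives of the permanent `perm_m` is an
invertible `m² × m²` matrix (its determinant is nonzero, so it has maximal
rank `m²`). -/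
theorem hessian_of_permanent_invertible (m : ℕ) (hm : 2 ≤ m)
    (permPoly : MvPolynomial (Fin m × Fin m) ℂ)
    (hperm : permPoly = ∑ σ : Equiv.Perm (Fin m), ∏ i, X (i, σ i))
    (x : Fin m × Fin m → ℂ)
    (hx : ∀ p, x p = if p.1.val = 0 ∧ p.2.val = 0 then 1 - (m : ℂ) else 1) :
    Matrix.det (Matrix.of fun p q : Fin m × Fin m =>
        eval x (pderiv p (pderiv q permPoly))) ≠ 0 := by
  have hx' : x = PermanentHessian.cornerPoint ⟨0, by omega⟩ :=
    funext fun p => by simp [hx, PermanentHessian.cornerPoint, Fin.ext_iff]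
  subst hperm hx'
  exact PermanentHessian.det_hessian_permanentPoly_cornerPoint_ne_zero _ (by simpa using hm)
end

section
/- Let V be a complex vector space with basis x_1,…,x_v and suppose w ∈ S^d(S^n V) is a highest weight vector of weight π for GL(V) (i.e. annihilated by all raising operators and of weight π). Then (x_1^n)·w ∈ S^{d+1}(S^n V) is a highest weight vector of weight (n) + π. Consequently mult(S_{(dn−|μ|, μ)}V, S^d(S^n V)) ≤ mult(S_{((d+1)n−|μ|, μ)}V, S^{d+1}(S^n V)) for any fixed partition μ, i.e. this plethysm multiplicity is non-decreasing in d. -/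
noncomputable section

/-- Exponent vectors of monomials of degree `n` in `v + 1` variables:
a basis of `S^n V` for `dim V = v + 1`. -/
def PlethMon (v n : ℕ) : Type := {f : Fin (v + 1) → ℕ // ∑ i, f i = n}

/-- The model for `S^d(S^n V)`: degree-`d` homogeneous polynomials in
variables indexed by the degree-`n` monomials of `V`. -/
abbrev PlethRing (v n : ℕ) : Type := MvPolynomial (PlethMon v n) ℂ

lemma plethMon_shift_sum {v n : ℕ} (α : PlethMon v n) (i j : Fin (v + 1))
    (hj : α.1 j ≠ 0) :
    ∑ k, (α.1 k + (if k = i then 1 else 0) - (if k = j then 1 else 0)) = n := by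
  have hj' : 1 ≤ α.1 j := Nat.one_le_iff_ne_zero.mpr hj
  have key : ∀ k, ((α.1 k + (if k = i then 1 else 0) - (if k = j then 1 else 0) : ℕ) : ℤ)
      = (α.1 k : ℤ) + (if k = i then (1 : ℤ) else 0) - (if k = j then (1 : ℤ) else 0) := by
    intro k
    rcases eq_or_ne k j with rfl | hkj
    · split_ifs <;> simp <;> omega
    · split_ifs <;> simp [hkj] <;> omega
  have hcast : ((∑ k, (α.1 k + (if k = i then 1 else 0) - (if k = j then 1 else 0)) : ℕ) : ℤ)
      = (n : ℤ) := by
    rw [Nat.cast_sum, Finset.sum_congr rfl fun k _ => key k]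
    have h1 : ∑ k : Fin (v + 1), ((if k = i then (1 : ℤ) else 0)) = 1 := by simp
    have h2 : ∑ k : Fin (v + 1), ((if k = j then (1 : ℤ) else 0)) = 1 := by simp
    have h3 : ∑ k : Fin (v + 1), (α.1 k : ℤ) = (n : ℤ) := by
      rw [← Nat.cast_sum, α.2]
    simp only [Finset.sum_sub_distrib, Finset.sum_add_distrib, h1, h2, h3]
    ring
  exact_mod_cast hcast

/-- The Lie algebra element `E_{ij}` of `gl(V)` (sending `x_j` to `x_i`) acting
on `S^d(S^n V)` as a derivation: on a variable `z_α` (for `α` a degree-`n`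
monomial) it gives `α_j · z_{α + e_i - e_j}`. -/
def raiseOp (v n : ℕ) (i j : Fin (v + 1)) :
    Derivation ℂ (PlethRing v n) (PlethRing v n) :=
  MvPolynomial.mkDerivation ℂ fun α : PlethMon v n =>
    if h : α.1 j = 0 then 0
    else (α.1 j : ℂ) •
      (MvPolynomial.X ⟨fun k => α.1 k + (if k = i then 1 else 0) - (if k = j then 1 else 0),
        plethMon_shift_sum α i j h⟩ : PlethRing v n)

/-- The space of highest weight vectors of weight `π` (together with `0`) in
the degree-`d` part of `S^d(S^n V)`: homogeneous of degree `d`, an eigenvector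
of the torus operators `E_{ii}` with eigenvalue `π i`, and killed by the
raising operators `E_{ij}`, `i < j`.  Its dimension is the multiplicity of the
irreducible `GL(V)`-module `S_π V` in `S^d(S^n V)`. -/
def hwvSpace (v n d : ℕ) (π : Fin (v + 1) → ℕ) : Submodule ℂ (PlethRing v n) :=
  MvPolynomial.homogeneousSubmodule (PlethMon v n) ℂ d ⊓
    (⨅ i : Fin (v + 1),
      LinearMap.ker ((raiseOp v n i i).toLinearMap - (π i : ℂ) • LinearMap.id)) ⊓
    (⨅ i : Fin (v + 1), ⨅ j : Fin (v + 1), ⨅ _ : i < j,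
      LinearMap.ker (raiseOp v n i j).toLinearMap)

/-- The basis vector `x_1^n` of `S^n V`, i.e. the variable `z_{(n,0,…,0)}`. -/
def xOneN (v n : ℕ) : PlethMon v n :=
  ⟨fun k => if k = 0 then n else 0, by simp⟩

/-! The operators `E_ij` act as derivations, so weights add under multiplication and a product
of two vectors killed by the raising operators is again killed by them. The variable `x_1^n` is
itself a highest weight vector of weight `(n, 0, …, 0)`, and multiplication by it is injective
since the polynomial ring is a domain; it therefore embeds the highest weight vectors of weight `π`
into those of weight `(n) + π`. -/

open MvPolynomial

lemma Derivation.map_mul_of_eq_smul {R A : Type*} [CommSemiring R] [CommSemiring A] [Algebra R A]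
    (D : Derivation R A A) {a b : A} {r s : R} (ha : D a = r • a) (hb : D b = s • b) :
    D (a * b) = (r + s) • (a * b) := by
  rw [D.leibniz, ha, hb, smul_eq_mul, smul_eq_mul, mul_smul_comm, mul_smul_comm, mul_comm b,
    add_smul, add_comm]

lemma raiseOp_X {v n : ℕ} (i j : Fin (v + 1)) (α : PlethMon v n) :
    raiseOp v n i j (X α) =
      if h : α.1 j = 0 then 0
      else (α.1 j : ℂ) •
        (X ⟨fun k => α.1 k + (if k = i then 1 else 0) - (if k = j then 1 else 0),
          plethMon_shift_sum α i j h⟩ : PlethRing v n) := by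
  simp [raiseOp, mkDerivation_X]

lemma raiseOp_self_X {v n : ℕ} (i : Fin (v + 1)) (α : PlethMon v n) :
    raiseOp v n i i (X α) = (α.1 i : ℂ) • X α := by
  rw [raiseOp_X]
  split_ifs with h
  · simp [h]
  · congr
    ext k
    split_ifs <;> simp

lemma raiseOp_X_xOneN_of_lt {v n : ℕ} {i j : Fin (v + 1)} (hij : i < j) :
    raiseOp v n i j (X (xOneN v n)) = 0 := by
  rw [raiseOp_X, dif_pos]
  exact if_neg ((Fin.zero_le i).trans_lt hij).ne'

lemma mem_hwvSpace {v n d : ℕ} {π : Fin (v + 1) → ℕ} {w : PlethRing v n} :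
    w ∈ hwvSpace v n d π ↔
      w.IsHomogeneous d ∧ (∀ i, raiseOp v n i i w = (π i : ℂ) • w) ∧
        ∀ i j, i < j → raiseOp v n i j w = 0 := by
  simp only [hwvSpace, Submodule.mem_inf, Submodule.mem_iInf, LinearMap.mem_ker,
    LinearMap.sub_apply, LinearMap.smul_apply, LinearMap.id_apply, Derivation.coeFn_coe,
    sub_eq_zero, mem_homogeneousSubmodule, and_assoc]

lemma X_xOneN_mul_mem_hwvSpace {v n d : ℕ} {π : Fin (v + 1) → ℕ} {w : PlethRing v n}
    (hw : w ∈ hwvSpace v n d π) :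
    X (xOneN v n) * w ∈ hwvSpace v n (d + 1) (fun i => π i + if i = 0 then n else 0) := by
  obtain ⟨hhom, hweight, hraise⟩ := mem_hwvSpace.1 hw
  refine mem_hwvSpace.2 ⟨?_, fun i => ?_, fun i j hij => ?_⟩
  · simpa only [add_comm 1 d] using (isHomogeneous_X ℂ (xOneN v n)).mul hhom
  · rw [(raiseOp v n i i).map_mul_of_eq_smul (raiseOp_self_X i _) (hweight i), add_comm]
    simp [xOneN]
  · simp [Derivation.leibniz, raiseOp_X_xOneN_of_lt hij, hraise i j hij]

/-- Manivel's monotonicity (Prop. 5): multiplication by `x_1^n` sends a highest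
weight vector of weight `π` in `S^d(S^n V)` to a (nonzero) highest weight
vector of weight `(n) + π` in `S^{d+1}(S^n V)`; consequently, for a partition
`π` of `dn` (so `π = (dn - |μ|, μ)`), the plethysm multiplicity
`mult(S_{(dn-|μ|,μ)}V, S^d(S^n V))` is non-decreasing as `d ↦ d + 1`. -/
theorem hwv_mul_xOneN_and_plethysm_monotone (v n : ℕ) :
    (∀ (d : ℕ) (π : Fin (v + 1) → ℕ) (w : PlethRing v n),
      w ∈ hwvSpace v n d π →
        (MvPolynomial.X (xOneN v n) * w ∈
            hwvSpace v n (d + 1) (fun i => π i + if i = 0 then n else 0) ∧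
          (w ≠ 0 → MvPolynomial.X (xOneN v n) * w ≠ 0))) ∧
    (∀ (d : ℕ) (π : Fin (v + 1) → ℕ), (∑ i, π i = d * n) → Antitone π →
      Module.rank ℂ (hwvSpace v n d π) ≤
        Module.rank ℂ (hwvSpace v n (d + 1) (fun i => π i + if i = 0 then n else 0))) := by
  have hX : (X (xOneN v n) : PlethRing v n) ≠ 0 := X_ne_zero _
  refine ⟨fun d π w hw => ⟨X_xOneN_mul_mem_hwvSpace hw, mul_ne_zero hX⟩, fun d π _ _ => ?_⟩
  have hinj : Function.Injective (LinearMap.mulLeft ℂ (X (xOneN v n) : PlethRing v n)) :=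
    mul_right_injective₀ hX
  rw [← rank_map_eq hinj]
  exact Submodule.rank_mono (Submodule.map_le_iff_le_comap.2 fun w hw =>
    X_xOneN_mul_mem_hwvSpace hw)

end
end
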